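/- For any numbers 0 < ε < 1 and 0 < γ ≤ π/12 there exists a bounded measurable function φ : ℝ² → ℝ such that: (1) supp φ ⊆ B(ε), ∫_{ℝ²} φ = 0, and ∫_{ℝ²} |φ| ≤ 1; (2) ∫_{rot_s([0,x₁]×[0,x₂])} φ ≥ 1/4 whenever x₁, x₂ ≥ ε and |s| ≤ γ; and (3) M_s φ(x) < ε whenever x ∉ Γ_s(2ε) ∪ Γ_{s+π/2}(2ε) and 3γ < |s| < π/2 − 3γ. -/

import Mathlib

open MeasureTheory Filter Set Real
open scoped ENNReal

noncomputable section

/-- Rotation of the plane about the origin by angle `s`. -/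
def rot (s : ℝ) (p : ℝ × ℝ) : ℝ × ℝ :=
  (p.1 * Real.cos s - p.2 * Real.sin s, p.1 * Real.sin s + p.2 * Real.cos s)

/-- The open rectangle with slope `s`, corner `c` and side lengths `a`, `b`. -/
def rect (s : ℝ) (c : ℝ × ℝ) (a b : ℝ) : Set (ℝ × ℝ) :=
  (fun p => c + rot s p) '' (Set.Ioo 0 a ×ˢ Set.Ioo 0 b)

/-- `R` is an open rectangle with slope `s` whose side lengths satisfy `P`. -/
def IsRectWith (s : ℝ) (P : ℝ → Prop) (R : Set (ℝ × ℝ)) : Prop :=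
  ∃ c a b, 0 < a ∧ 0 < b ∧ P a ∧ P b ∧ R = rect s c a b

/-- `R` is an open rectangle with slope `s`. -/
def IsRect (s : ℝ) (R : Set (ℝ × ℝ)) : Prop :=
  IsRectWith s (fun _ => True) R

/-- Average of `f` over the set `R`. -/
def avg (f : ℝ × ℝ → ℝ) (R : Set (ℝ × ℝ)) : ℝ :=
  (∫ p in R, f p) / (volume R).toReal

/-- The filter of slope-`s` rectangles containing `x` with diameters shrinking to `0`. -/
def rectFilter (s : ℝ) (x : ℝ × ℝ) : Filter (Set (ℝ × ℝ)) :=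
  ⨅ d ∈ Set.Ioi (0 : ℝ), Filter.principal {R | IsRect s R ∧ x ∈ R ∧ Metric.diam R < d}

/-- The upper derivative `D̄_s f (x)`. -/
def upperDeriv (s : ℝ) (f : ℝ × ℝ → ℝ) (x : ℝ × ℝ) : EReal :=
  Filter.limsup (fun R => (avg f R : EReal)) (rectFilter s x)

/-- The basis `R_s` differentiates the integral of `f`. -/
def Differentiates (s : ℝ) (f : ℝ × ℝ → ℝ) : Prop :=
  ∀ᵐ x : ℝ × ℝ, Filter.Tendsto (fun R => avg f R) (rectFilter s x) (nhds (f x))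

/-- `S ⊆ [0, π/2)` is a `G_δ` set in `[0, π/2)`. -/
def IsGdeltaIn (S : Set ℝ) : Prop :=
  ∃ G : ℕ → Set ℝ, (∀ k, IsOpen (G k)) ∧ S = (⋂ k, G k) ∩ Set.Ico 0 (π / 2)

/-- `S` is a `G_δσ` set in `[0, π/2)`. -/
def IsGdeltaSigmaIn (S : Set ℝ) : Prop :=
  ∃ F : ℕ → Set ℝ, (∀ n, IsGdeltaIn (F n)) ∧ S = ⋃ n, F n

/-- `S` is an `R`-set. -/
def IsRSet (S : Set ℝ) : Prop :=
  S ⊆ Set.Ico 0 (π / 2) ∧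
    ∃ f : ℝ × ℝ → ℝ, Integrable f ∧
      (∀ s ∈ Set.Ico 0 (π / 2) \ S, Differentiates s f) ∧
      (∀ s ∈ S, ∀ᵐ x : ℝ × ℝ, upperDeriv s f x = ⊤)

/-- `S` is a `WR`-set. -/
def IsWRSet (S : Set ℝ) : Prop :=
  S ⊆ Set.Ico 0 (π / 2) ∧
    ∃ f : ℝ × ℝ → ℝ, Integrable f ∧
      (∀ s ∈ Set.Ico 0 (π / 2) \ S, Differentiates s f) ∧
      (∀ s ∈ S, 0 < volume {x : ℝ × ℝ | upperDeriv s f x = ⊤})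

/-- The grid square `Q_k^n` of side `1/n`. -/
def gridSq (n : ℕ) (k : ℤ × ℤ) : Set (ℝ × ℝ) :=
  (fun x : ℝ × ℝ => ((n : ℝ))⁻¹ • (((k.1 : ℝ), (k.2 : ℝ)) + x)) ''
    (Set.Ico (-(1 : ℝ)/2) (1/2) ×ˢ Set.Ico (-(1 : ℝ)/2) (1/2))

/-- `mes_* A = inf_k |A ∩ Q_k|`. -/
def mesLow (A : Set (ℝ × ℝ)) : ℝ :=
  ⨅ k : ℤ × ℤ, (volume (A ∩ gridSq 1 k)).toReal

/-- `mes^* A = sup_k |A ∩ Q_k|`. -/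
def mesUp (A : Set (ℝ × ℝ)) : ℝ :=
  ⨆ k : ℤ × ℤ, (volume (A ∩ gridSq 1 k)).toReal

/-- `dil_n A = {x : n x ∈ A}`. -/
def dil (n : ℕ) (A : Set (ℝ × ℝ)) : Set (ℝ × ℝ) :=
  {x : ℝ × ℝ | (n : ℝ) • x ∈ A}

/-- `A` is a `δ`-set with respect to the slope `s`: a union of mutually disjoint
rectangles of slope `s` with both side lengths `≥ δ`. -/
def IsDeltaSet (s δ : ℝ) (A : Set (ℝ × ℝ)) : Prop :=
  ∃ (ι : Type) (R : ι → Set (ℝ × ℝ)),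
    (∀ i, IsRectWith s (fun a => δ ≤ a) (R i)) ∧
      Pairwise (Function.onFun Disjoint R) ∧ A = ⋃ i, R i

/-- The maximal function over slope-`s` rectangles whose side lengths satisfy `P`. -/
def maxFn (s : ℝ) (P : ℝ → Prop) (f : ℝ × ℝ → ℝ) (x : ℝ × ℝ) : ℝ≥0∞ :=
  ⨆ (R : Set (ℝ × ℝ)) (_ : IsRectWith s P R ∧ x ∈ R),
    ENNReal.ofReal (|∫ p in R, f p| / (volume R).toReal)

/-- The points `θ_k`, `k = ±1, ±2, …`. -/
def theta (ε γ : ℝ) (k : ℤ) : ℝ × ℝ :=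
  (ε / 2 ^ k.natAbs, (k.sign : ℝ) * Real.tan γ * ε / 2 ^ k.natAbs)

/-- The strip `Γ_s(ε)`. -/
def strip (s ε : ℝ) : Set (ℝ × ℝ) :=
  rot s '' {x : ℝ × ℝ | |x.2| < ε}

/-- The Euclidean ball `B(ε)` in the plane. -/
def euclBall (ε : ℝ) : Set (ℝ × ℝ) :=
  {x : ℝ × ℝ | Real.sqrt (x.1 ^ 2 + x.2 ^ 2) ≤ ε}

/-!
`φ` is a sum of `N` dipoles. At scale `a_k = ε / 2 ^ (k + 2)` a positive and a negative small
square of equal area, carrying masses `±1/(2N)`, sit at `(a_k, ±(21/20) tan γ · a_k)`, just beyond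
the two lines of slope `±γ` through the origin. A corner rectangle of slope `|s| ≤ γ` contains
every positive square and misses every negative one, so its integral is `1/2`.

For `3γ < |s| < π/2 - 3γ` a rectangle of slope `s` only sees the dipoles it cuts. The dipoles lie
near a ray that crosses the rectangle's edges transversally and shrink geometrically, so each
edge line passes near at most two of them: at most eight are cut, and the integral is at most
`4/N`. A rectangle that meets a dipole (which lies within `2ε/5` of the origin) and contains a
point outside both strips of width `2ε` has both sides at least `8ε/5`, so with `N ≥ 8/ε³` its
average is at most `ε/2`.
-/

lemma indicator_one_mem_Icc {α : Type*} (s : Set α) (x : α) :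
    s.indicator (1 : α → ℝ) x ∈ Icc 0 1 := by
  by_cases hx : x ∈ s <;> simp [hx]

section DipoleSum

variable {α : Type*} [MeasurableSpace α] {μ : Measure α}

def Cuts (A B : Set α) : Prop := (A ∩ B).Nonempty ∧ ¬ B ⊆ A

lemma measureReal_inter_sub_eq_zero_of_not_cuts {P M A : Set α} (hPM : μ P = μ M)
    (h : ¬ Cuts A (P ∪ M)) : μ.real (P ∩ A) - μ.real (M ∩ A) = 0 := by
  rcases not_and_or.1 h with hA | hA
  · rw [not_nonempty_iff_eq_empty, inter_union_distrib_left, union_empty_iff] at hA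
    simp [inter_comm P, inter_comm M, hA.1, hA.2]
  · rw [not_not, union_subset_iff] at hA
    rw [inter_eq_left.2 hA.1, inter_eq_left.2 hA.2, measureReal_def, measureReal_def, hPM,
      sub_self]

lemma abs_measureReal_inter_sub_le {P M A : Set α} (hPM : μ P = μ M) (hP : μ P ≠ ∞) :
    |μ.real (P ∩ A) - μ.real (M ∩ A)| ≤ μ.real P := by
  have hMP : μ.real M = μ.real P := by rw [measureReal_def, measureReal_def, hPM]
  have h1 : μ.real (P ∩ A) ≤ μ.real P := measureReal_mono inter_subset_left hP
  have h2 : μ.real (M ∩ A) ≤ μ.real P := hMP ▸ measureReal_mono inter_subset_left (hPM ▸ hP)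
  exact abs_sub_le_of_nonneg_of_le measureReal_nonneg h1 measureReal_nonneg h2

variable (μ) (P M : ℕ → Set α)

def dipoleSum (N : ℕ) (x : α) : ℝ :=
  ∑ k ∈ Finset.range N, (2 * N * μ.real (P k))⁻¹ * ((P k).indicator 1 x - (M k).indicator 1 x)

variable {μ P M} {N : ℕ}

lemma measurable_dipoleSum (hP : ∀ k, MeasurableSet (P k)) (hM : ∀ k, MeasurableSet (M k)) :
    Measurable (dipoleSum μ P M N) :=
  Finset.measurable_sum _ fun k _ =>
    ((measurable_one.indicator (hP k)).sub (measurable_one.indicator (hM k))).const_mul _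

lemma abs_dipoleSum_le (x : α) :
    |dipoleSum μ P M N x| ≤ ∑ k ∈ Finset.range N, |(2 * N * μ.real (P k))⁻¹| := by
  refine (Finset.abs_sum_le_sum_abs _ _).trans (Finset.sum_le_sum fun k _ => ?_)
  obtain ⟨hP₀, hP⟩ := indicator_one_mem_Icc (P k) x
  obtain ⟨hM₀, hM⟩ := indicator_one_mem_Icc (M k) x
  rw [abs_mul]
  exact mul_le_of_le_one_right (abs_nonneg _) (abs_sub_le_iff.2 ⟨by linarith, by linarith⟩)

lemma support_dipoleSum_subset : Function.support (dipoleSum μ P M N) ⊆ ⋃ k, (P k ∪ M k) := by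
  intro x hx
  obtain ⟨k, -, hk⟩ := Finset.exists_ne_zero_of_sum_ne_zero hx
  by_contra hx
  simp only [mem_iUnion, not_exists, mem_union, not_or] at hx
  simp [indicator_of_notMem (hx k).1, indicator_of_notMem (hx k).2] at hk

section Integrals

variable (hP : ∀ k, MeasurableSet (P k)) (hM : ∀ k, MeasurableSet (M k))
  (hPfin : ∀ k, μ (P k) ≠ ∞) (hMfin : ∀ k, μ (M k) ≠ ∞)
include hP hM hPfin hMfin

lemma integrable_indicator_one (k : ℕ) :
    Integrable ((P k).indicator (1 : α → ℝ)) μ ∧ Integrable ((M k).indicator (1 : α → ℝ)) μ :=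
  ⟨(integrable_indicator_iff (hP k)).2 (integrableOn_const (hPfin k)),
    (integrable_indicator_iff (hM k)).2 (integrableOn_const (hMfin k))⟩

lemma setIntegral_dipoleSum (A : Set α) :
    ∫ x in A, dipoleSum μ P M N x ∂μ =
      ∑ k ∈ Finset.range N, (2 * N * μ.real (P k))⁻¹ * (μ.real (P k ∩ A) - μ.real (M k ∩ A)) := by
  have hint := integrable_indicator_one hP hM hPfin hMfin
  have hterm : ∀ k, Integrable (fun x => (2 * N * μ.real (P k))⁻¹ *
      ((P k).indicator 1 x - (M k).indicator 1 x)) (μ.restrict A) :=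
    fun k => (((hint k).1.sub (hint k).2).const_mul _).restrict
  unfold dipoleSum
  rw [integral_finsetSum _ fun k _ => hterm k]
  refine Finset.sum_congr rfl fun k _ => ?_
  rw [integral_const_mul, integral_sub (hint k).1.restrict (hint k).2.restrict,
    integral_indicator_one (hP k),
    integral_indicator_one (hM k), measureReal_restrict_apply (hP k),
    measureReal_restrict_apply (hM k)]

lemma integral_dipoleSum_eq_zero (hPM : ∀ k, μ (P k) = μ (M k)) :
    ∫ x, dipoleSum μ P M N x ∂μ = 0 := by
  rw [← setIntegral_univ, setIntegral_dipoleSum hP hM hPfin hMfin]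
  refine Finset.sum_eq_zero fun k _ => ?_
  simp [measureReal_def, hPM k]

lemma setIntegral_dipoleSum_eq_half (hN : N ≠ 0) (hpos : ∀ k, μ.real (P k) ≠ 0) {A : Set α}
    (hPA : ∀ k, P k ⊆ A) (hMA : ∀ k, Disjoint (M k) A) :
    ∫ x in A, dipoleSum μ P M N x ∂μ = 1 / 2 := by
  rw [setIntegral_dipoleSum hP hM hPfin hMfin]
  have hterm : ∀ k, (2 * N * μ.real (P k))⁻¹ * (μ.real (P k ∩ A) - μ.real (M k ∩ A)) =
      (2 * N : ℝ)⁻¹ := fun k => by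
    rw [inter_eq_left.2 (hPA k), (hMA k).inter_eq, measureReal_empty, sub_zero, mul_inv,
      inv_mul_cancel_right₀ (hpos k)]
  simp only [hterm, Finset.sum_const, Finset.card_range, nsmul_eq_mul]
  field_simp

open scoped Classical in
lemma abs_setIntegral_dipoleSum_le (hPM : ∀ k, μ (P k) = μ (M k)) (A : Set α) :
    |∫ x in A, dipoleSum μ P M N x ∂μ| ≤
      ((Finset.range N).filter fun k => Cuts A (P k ∪ M k)).card * (2 * N : ℝ)⁻¹ := by
  rw [setIntegral_dipoleSum hP hM hPfin hMfin, ← Finset.sum_filter_of_ne (p := fun k =>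
    Cuts A (P k ∪ M k)) fun k _ hk => by_contra fun h => hk (by
      rw [measureReal_inter_sub_eq_zero_of_not_cuts (hPM k) h, mul_zero])]
  refine (Finset.abs_sum_le_sum_abs _ _).trans ?_
  rw [← nsmul_eq_mul, ← Finset.sum_const]
  refine Finset.sum_le_sum fun k _ => ?_
  rw [abs_mul, abs_of_nonneg (by positivity)]
  rcases eq_or_ne (μ.real (P k)) 0 with h0 | h0
  · simp [h0]
  calc (2 * N * μ.real (P k))⁻¹ * |μ.real (P k ∩ A) - μ.real (M k ∩ A)|
      ≤ (2 * N * μ.real (P k))⁻¹ * μ.real (P k) := by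
        gcongr; exact abs_measureReal_inter_sub_le (hPM k) (hPfin k)
    _ = (2 * N : ℝ)⁻¹ := by rw [mul_inv, inv_mul_cancel_right₀ h0]

lemma integral_abs_dipoleSum_le_one (hPM : ∀ k, μ (P k) = μ (M k)) :
    ∫ x, |dipoleSum μ P M N x| ∂μ ≤ 1 := by
  set c : ℕ → ℝ := fun k => (2 * N * μ.real (P k))⁻¹
  have hc : ∀ k, 0 ≤ c k := fun k => by positivity
  have hint := integrable_indicator_one hP hM hPfin hMfin
  have hdom : ∀ x, |dipoleSum μ P M N x| ≤
      ∑ k ∈ Finset.range N, c k * ((P k).indicator 1 x + (M k).indicator 1 x) := fun x => by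
    refine (Finset.abs_sum_le_sum_abs _ _).trans (Finset.sum_le_sum fun k _ => ?_)
    obtain ⟨hP₀, -⟩ := indicator_one_mem_Icc (P k) x
    obtain ⟨hM₀, -⟩ := indicator_one_mem_Icc (M k) x
    rw [abs_mul, abs_of_nonneg (hc k)]
    exact mul_le_mul_of_nonneg_left (abs_sub_le_iff.2 ⟨by linarith, by linarith⟩) (hc k)
  have hmass : ∀ k, c k * (μ.real (P k) + μ.real (M k)) ≤ (N : ℝ)⁻¹ := fun k => by
    rw [measureReal_def (s := M k), ← hPM k, ← measureReal_def]
    rcases eq_or_ne (μ.real (P k)) 0 with h0 | h0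
    · simp [c, h0]
    · simp only [c]
      field_simp
      norm_num
  have hterm : ∀ k, Integrable (fun x => c k * ((P k).indicator 1 x + (M k).indicator 1 x)) μ :=
    fun k => ((hint k).1.add (hint k).2).const_mul _
  have hφ : Integrable (dipoleSum μ P M N) μ :=
    integrable_finsetSum _ fun k _ => ((hint k).1.sub (hint k).2).const_mul _
  calc ∫ x, |dipoleSum μ P M N x| ∂μ
      ≤ ∫ x, ∑ k ∈ Finset.range N, c k * ((P k).indicator 1 x + (M k).indicator 1 x) ∂μ :=
        integral_mono hφ.abs (integrable_finsetSum _ fun k _ => hterm k) hdom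
    _ = ∑ k ∈ Finset.range N, c k * (μ.real (P k) + μ.real (M k)) := by
        rw [integral_finsetSum _ fun k _ => hterm k]
        refine Finset.sum_congr rfl fun k _ => ?_
        rw [integral_const_mul, integral_add (hint k).1 (hint k).2, integral_indicator_one (hP k),
          integral_indicator_one (hM k)]
    _ ≤ ∑ _k ∈ Finset.range N, (N : ℝ)⁻¹ := Finset.sum_le_sum fun k _ => hmass k
    _ ≤ 1 := by
        rw [Finset.sum_const, Finset.card_range, nsmul_eq_mul]
        exact mul_inv_le_one

end Integrals

end DipoleSum

lemma Cuts.image_of_preimage {α β : Type*} {f : α → β} {A : Set β} {B : Set α}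
    (h : Cuts (f ⁻¹' A) B) : Cuts A (f '' B) := by
  obtain ⟨⟨x, hxA, hxB⟩, hB⟩ := h
  obtain ⟨y, hyB, hyA⟩ := not_subset.1 hB
  exact ⟨⟨f x, hxA, mem_image_of_mem f hxB⟩, fun h => hyA (h (mem_image_of_mem f hyB))⟩

lemma abs_sub_le_or_of_mem_Ioo_of_notMem_Ioo {x y m δ lo hi : ℝ} (hx : x ∈ Ioo lo hi)
    (hy : y ∉ Ioo lo hi) (hxm : |x - m| ≤ δ) (hym : |y - m| ≤ δ) :
    |m - lo| ≤ δ ∨ |m - hi| ≤ δ := by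
  rw [abs_le] at hxm hym
  rw [mem_Ioo, not_and_or, not_lt, not_lt] at hy
  rcases hy with hy | hy
  · exact .inl (abs_le.2 ⟨by linarith [hx.1], by linarith⟩)
  · exact .inr (abs_le.2 ⟨by linarith, by linarith [hx.2]⟩)

lemma near_edge_of_cuts_box {lo₁ hi₁ lo₂ hi₂ δ : ℝ} {m : ℝ × ℝ} {B : Set (ℝ × ℝ)}
    (hB : ∀ z ∈ B, |z.1 - m.1| ≤ δ ∧ |z.2 - m.2| ≤ δ) (h : Cuts (Ioo lo₁ hi₁ ×ˢ Ioo lo₂ hi₂) B) :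
    (|m.1 - lo₁| ≤ δ ∨ |m.1 - hi₁| ≤ δ) ∨ |m.2 - lo₂| ≤ δ ∨ |m.2 - hi₂| ≤ δ := by
  obtain ⟨⟨p, ⟨hp₁, hp₂⟩, hpB⟩, hB'⟩ := h
  obtain ⟨q, hqB, hq⟩ := not_subset.1 hB'
  rcases not_and_or.1 (mem_prod.not.1 hq) with hq | hq
  · exact .inl (abs_sub_le_or_of_mem_Ioo_of_notMem_Ioo hp₁ hq (hB p hpB).1 (hB q hqB).1)
  · exact .inr (abs_sub_le_or_of_mem_Ioo_of_notMem_Ioo hp₂ hq (hB p hpB).2 (hB q hqB).2)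

lemma card_le_two_of_forall_lt_add_two {T : Finset ℕ} (hT : ∀ i ∈ T, ∀ j ∈ T, j < i + 2) :
    T.card ≤ 2 := by
  rcases T.eq_empty_or_nonempty with h | h
  · simp [h]
  calc T.card ≤ (Finset.Icc (T.min' h) (T.min' h + 1)).card :=
        Finset.card_le_card fun k hk => Finset.mem_Icc.2
          ⟨T.min'_le k hk, Nat.lt_succ_iff.1 (hT _ (T.min'_mem h) k hk)⟩
    _ = 2 := by simp only [Nat.card_Icc]; omega

lemma card_filter_abs_mul_sub_le_two {a : ℕ → ℝ} (ha : ∀ k, 0 < a k)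
    (hgap : ∀ i j, i + 2 ≤ j → 4 * a j ≤ a i) {β c d : ℝ} (hβ : 5 * c < 3 * |β|)
    (S : Finset ℕ) : (S.filter fun k => |a k * β - d| ≤ c * a k).card ≤ 2 := by
  refine card_le_two_of_forall_lt_add_two fun i hi j hj => not_le.1 fun hij => ?_
  have hi := abs_le.1 (Finset.mem_filter.1 hi).2
  have hj := abs_le.1 (Finset.mem_filter.1 hj).2
  have hgij := hgap i j hij
  have hai := ha i
  have haj := ha j
  have hc : 0 ≤ c := by nlinarith
  have h4 : 0 ≤ a i - 4 * a j := by linarith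
  rcases abs_cases β with ⟨hb, hβ₀⟩ | ⟨hb, hβ₀⟩ <;> rw [hb] at hβ
  · nlinarith [mul_nonneg hβ₀ h4, mul_nonneg hc h4]
  · nlinarith [mul_nonneg (neg_nonneg.2 hβ₀.le) h4, mul_nonneg hc h4]

lemma rot_rot (s u : ℝ) (p : ℝ × ℝ) : rot s (rot u p) = rot (s + u) p := by
  simp only [rot, cos_add, sin_add, Prod.mk.injEq]
  constructor <;> ring

lemma rot_zero (p : ℝ × ℝ) : rot 0 p = p := by
  simp [rot]

lemma rot_neg_rot (s : ℝ) (p : ℝ × ℝ) : rot (-s) (rot s p) = p := by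
  rw [rot_rot, neg_add_cancel, rot_zero]

lemma rot_rot_neg (s : ℝ) (p : ℝ × ℝ) : rot s (rot (-s) p) = p := by
  rw [rot_rot, add_neg_cancel, rot_zero]

lemma mem_image_rot_iff {s : ℝ} {A : Set (ℝ × ℝ)} {p : ℝ × ℝ} :
    p ∈ rot s '' A ↔ rot (-s) p ∈ A :=
  ⟨by rintro ⟨y, hy, rfl⟩; rwa [rot_neg_rot], fun h => ⟨_, h, rot_rot_neg s p⟩⟩

lemma image_rot_eq_preimage (s : ℝ) (A : Set (ℝ × ℝ)) : rot s '' A = rot (-s) ⁻¹' A :=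
  ext fun _ => mem_image_rot_iff

def rotL (s : ℝ) : (ℝ × ℝ) →ₗ[ℝ] ℝ × ℝ where
  toFun := rot s
  map_add' p q := by
    simp only [rot, Prod.fst_add, Prod.snd_add, Prod.mk_add_mk, Prod.mk.injEq]
    constructor <;> ring
  map_smul' r p := by
    simp only [rot, Prod.smul_fst, Prod.smul_snd, Prod.smul_mk, smul_eq_mul, RingHom.id_apply,
      Prod.mk.injEq]
    constructor <;> ring

@[simp] lemma coe_rotL (s : ℝ) : ⇑(rotL s) = rot s := rfl

lemma rot_add (s : ℝ) (p q : ℝ × ℝ) : rot s (p + q) = rot s p + rot s q :=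
  (rotL s).map_add p q

lemma rot_sub (s : ℝ) (p q : ℝ × ℝ) : rot s (p - q) = rot s p - rot s q :=
  (rotL s).map_sub p q

lemma det_rotL (s : ℝ) : LinearMap.det (rotL s) = 1 := by
  rw [← LinearMap.det_toMatrix (Module.Basis.finTwoProd ℝ)]
  have h : LinearMap.toMatrix (Module.Basis.finTwoProd ℝ) (Module.Basis.finTwoProd ℝ) (rotL s)
      = !![cos s, -sin s; sin s, cos s] := by
    ext i j
    fin_cases i <;> fin_cases j <;>
      simp [LinearMap.toMatrix_apply, rot, Module.Basis.finTwoProd]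
  rw [h, Matrix.det_fin_two_of]
  linear_combination sin_sq_add_cos_sq s

lemma volume_image_rot (s : ℝ) (A : Set (ℝ × ℝ)) : volume (rot s '' A) = volume A := by
  rw [← coe_rotL, Measure.addHaar_image_linearMap, det_rotL]
  simp

lemma rect_eq_image_rot (s : ℝ) (c : ℝ × ℝ) (a b : ℝ) :
    rect s c a b = rot s '' (Ioo (rot (-s) c).1 ((rot (-s) c).1 + a) ×ˢ
      Ioo (rot (-s) c).2 ((rot (-s) c).2 + b)) := by
  ext p
  rw [mem_image_rot_iff, rect]
  constructor
  · rintro ⟨y, ⟨⟨hy₁, hy₂⟩, hy₃, hy₄⟩, rfl⟩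
    simp only [rot_add, rot_neg_rot, Prod.fst_add, Prod.snd_add, mem_prod, mem_Ioo]
    exact ⟨⟨by linarith, by linarith⟩, by linarith, by linarith⟩
  · rintro ⟨⟨h₁, h₂⟩, h₃, h₄⟩
    refine ⟨rot (-s) p - rot (-s) c, ⟨⟨?_, ?_⟩, ?_, ?_⟩, ?_⟩
    · simp only [Prod.fst_sub]; linarith
    · simp only [Prod.fst_sub]; linarith
    · simp only [Prod.snd_sub]; linarith
    · simp only [Prod.snd_sub]; linarith
    · simp only [rot_sub, rot_rot_neg, add_sub_cancel]

lemma measureReal_rect (s : ℝ) (c : ℝ × ℝ) {a b : ℝ} (ha : 0 ≤ a) (hb : 0 ≤ b) :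
    volume.real (rect s c a b) = a * b := by
  rw [measureReal_def, rect_eq_image_rot, volume_image_rot, Measure.volume_eq_prod,
    Measure.prod_prod, Real.volume_Ioo, Real.volume_Ioo, ENNReal.toReal_mul, add_sub_cancel_left,
    add_sub_cancel_left, ENNReal.toReal_ofReal ha, ENNReal.toReal_ofReal hb]

lemma abs_rot_fst_le (s : ℝ) (p : ℝ × ℝ) : |(rot s p).1| ≤ |p.1| + |p.2| := by
  calc |p.1 * cos s - p.2 * sin s| ≤ |p.1 * cos s| + |p.2 * sin s| := abs_sub _ _
    _ ≤ |p.1| + |p.2| := by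
        rw [abs_mul, abs_mul]
        gcongr <;> exact mul_le_of_le_one_right (abs_nonneg _) (by simp [abs_cos_le_one,
          abs_sin_le_one])

lemma abs_rot_snd_le (s : ℝ) (p : ℝ × ℝ) : |(rot s p).2| ≤ |p.1| + |p.2| := by
  calc |p.1 * sin s + p.2 * cos s| ≤ |p.1 * sin s| + |p.2 * cos s| := abs_add_le _ _
    _ ≤ |p.1| + |p.2| := by
        rw [abs_mul, abs_mul]
        gcongr <;> exact mul_le_of_le_one_right (abs_nonneg _) (by simp [abs_cos_le_one,
          abs_sin_le_one])

lemma mem_strip_iff {s e : ℝ} {x : ℝ × ℝ} : x ∈ strip s e ↔ |(rot (-s) x).2| < e :=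
  mem_image_rot_iff

lemma mem_strip_add_pi_div_two_iff {s e : ℝ} {x : ℝ × ℝ} :
    x ∈ strip (s + π / 2) e ↔ |(rot (-s) x).1| < e := by
  rw [mem_strip_iff, ← abs_neg]
  simp only [rot, neg_add_rev, sin_add, cos_add, sin_neg, cos_neg, cos_pi_div_two,
    sin_pi_div_two]
  ring_nf

lemma mul_sin_add_mul_cos_pos {γ s x y : ℝ} (hγ : γ < π / 2) (hs : |s| ≤ γ) (hx : 0 ≤ x)
    (hxy : tan γ * x < y) : 0 < x * sin s + y * cos s := by
  have hγ₀ : 0 ≤ γ := (abs_nonneg s).trans hs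
  have hcγ : 0 < cos γ := cos_pos_of_mem_Ioo ⟨by linarith [pi_pos], hγ⟩
  have hy : 0 < y := lt_of_le_of_lt (mul_nonneg (tan_nonneg_of_nonneg_of_le_pi_div_two hγ₀
    hγ.le) hx) hxy
  have hcos : cos γ ≤ cos s := by
    rw [← cos_abs s]
    exact cos_le_cos_of_nonneg_of_le_pi (abs_nonneg s) (by linarith [pi_pos]) hs
  have hsin : -sin γ ≤ sin s := by
    rw [← sin_neg]
    exact sin_le_sin_of_le_of_le_pi_div_two (by linarith) (by linarith [le_abs_self s])
      (by linarith [neg_abs_le s])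
  have hsγ : sin γ = tan γ * cos γ := by rw [tan_eq_sin_div_cos, div_mul_cancel₀ _ hcγ.ne']
  nlinarith [mul_le_mul_of_nonneg_left hsin hx, mul_le_mul_of_nonneg_left hcos hy.le,
    mul_pos hcγ (sub_pos.2 hxy)]

lemma sin_le_abs_sin {θ s : ℝ} (hθ₀ : 0 ≤ θ) (hθ : θ ≤ |s|) (hs : |s| ≤ π / 2) :
    sin θ ≤ |sin s| := by
  rw [abs_sin_eq_sin_abs_of_abs_le_pi (by linarith [pi_pos])]
  exact sin_le_sin_of_le_of_le_pi_div_two (by linarith [pi_pos]) hs hθ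

lemma sin_le_abs_cos {θ s : ℝ} (hθ : 0 ≤ θ) (hs : |s| ≤ π / 2 - θ) : sin θ ≤ |cos s| := by
  rw [← cos_pi_div_two_sub, ← cos_abs s, abs_of_nonneg (cos_nonneg_of_neg_pi_div_two_le_of_le
    (by linarith [pi_pos, abs_nonneg s]) (by linarith))]
  exact cos_le_cos_of_nonneg_of_le_pi (abs_nonneg s) (by linarith [pi_pos]) hs

lemma lt_pi_div_two_of_le_pi_div_twelve {γ : ℝ} (hγ : γ ≤ π / 12) : γ < π / 2 := by
  linarith [pi_pos]

section SmallAngle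

variable {γ : ℝ} (hγ₀ : 0 < γ) (hγ : γ ≤ π / 12)
include hγ₀ hγ

lemma le_cos_of_le_pi_div_twelve : 24 / 25 ≤ cos γ := by
  have := one_sub_sq_div_two_le_cos (x := γ)
  nlinarith [pi_lt_d2]

lemma tan_pos_of_le_pi_div_twelve : 0 < tan γ :=
  tan_pos_of_pos_of_lt_pi_div_two hγ₀ (lt_pi_div_two_of_le_pi_div_twelve hγ)

lemma tan_le_of_le_pi_div_twelve : tan γ ≤ 7 / 25 := by
  have hc := le_cos_of_le_pi_div_twelve hγ₀ hγ
  have hs : sin γ ≤ 0.2625 := (sin_le hγ₀.le).trans (by linarith [pi_lt_d2])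
  rw [tan_eq_sin_div_cos, div_le_iff₀ (by linarith)]
  nlinarith

lemma mul_tan_le_sin_three_mul : 21 / 10 * tan γ ≤ sin (3 * γ) := by
  have hc := le_cos_of_le_pi_div_twelve hγ₀ hγ
  have hs : 0 < sin γ := sin_pos_of_pos_of_lt_pi hγ₀ (by linarith [pi_pos])
  have hcpos : 0 < cos γ := by linarith
  rw [tan_eq_sin_div_cos, sin_three_mul, mul_div_assoc', div_le_iff₀ hcpos]
  nlinarith [sin_sq_add_cos_sq γ, cos_le_one γ, mul_pos hs hcpos, sq_nonneg (cos γ - 24 / 25),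
    sq_nonneg (sin γ)]

end SmallAngle

def scale (ε : ℝ) (k : ℕ) : ℝ := ε / 2 ^ (k + 2)

lemma scale_pos {ε : ℝ} (hε : 0 < ε) (k : ℕ) : 0 < scale ε k := by
  unfold scale; positivity

lemma scale_le {ε : ℝ} (hε : 0 < ε) (k : ℕ) : scale ε k ≤ ε / 4 := by
  unfold scale
  gcongr
  calc (4 : ℝ) = 2 ^ 2 := by norm_num
    _ ≤ 2 ^ (k + 2) := pow_le_pow_right₀ one_le_two (by omega)

lemma four_mul_scale_le {ε : ℝ} (hε : 0 < ε) {i j : ℕ} (hij : i + 2 ≤ j) :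
    4 * scale ε j ≤ scale ε i := by
  have h : (2 : ℝ) ^ (i + 2) * 4 ≤ 2 ^ (j + 2) := by
    calc (2 : ℝ) ^ (i + 2) * 4 = 2 ^ (i + 2 + 2) := by ring
      _ ≤ 2 ^ (j + 2) := pow_le_pow_right₀ one_le_two (by omega)
  unfold scale
  rw [mul_div_assoc', div_le_div_iff₀ (by positivity) (by positivity)]
  nlinarith

-- Balls in `ℝ × ℝ` are open squares: the product carries the sup metric.
def posBlob (ε γ : ℝ) (k : ℕ) : Set (ℝ × ℝ) :=
  Metric.ball (scale ε k, 21 / 20 * tan γ * scale ε k) (tan γ * scale ε k / 100)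

def negBlob (ε γ : ℝ) (k : ℕ) : Set (ℝ × ℝ) :=
  Metric.ball (scale ε k, -(21 / 20 * tan γ * scale ε k)) (tan γ * scale ε k / 100)

def phi (ε γ : ℝ) (N : ℕ) : ℝ × ℝ → ℝ :=
  dipoleSum volume (posBlob ε γ) (negBlob ε γ) N

lemma volume_posBlob_eq (ε γ : ℝ) (k : ℕ) : volume (posBlob ε γ k) = volume (negBlob ε γ k) := by
  simp only [posBlob, negBlob, Measure.addHaar_ball_center]

lemma mem_posBlob_iff {ε γ : ℝ} {k : ℕ} {z : ℝ × ℝ} : z ∈ posBlob ε γ k ↔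
    |z.1 - scale ε k| < tan γ * scale ε k / 100 ∧
      |z.2 - 21 / 20 * tan γ * scale ε k| < tan γ * scale ε k / 100 := by
  rw [posBlob, Metric.mem_ball, Prod.dist_eq, max_lt_iff, Real.dist_eq, Real.dist_eq]

lemma mem_negBlob_iff {ε γ : ℝ} {k : ℕ} {z : ℝ × ℝ} : z ∈ negBlob ε γ k ↔
    |z.1 - scale ε k| < tan γ * scale ε k / 100 ∧
      |z.2 + 21 / 20 * tan γ * scale ε k| < tan γ * scale ε k / 100 := by
  rw [negBlob, Metric.mem_ball, Prod.dist_eq, max_lt_iff, Real.dist_eq, Real.dist_eq,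
    sub_neg_eq_add]

section Blobs

variable {ε γ : ℝ} (hε : 0 < ε) (hγ₀ : 0 < γ) (hγ : γ ≤ π / 12)
include hε hγ₀ hγ

lemma measureReal_posBlob_ne_zero (k : ℕ) : volume.real (posBlob ε γ k) ≠ 0 :=
  (ENNReal.toReal_pos (Metric.measure_ball_pos _ _ (by
    have := tan_pos_of_le_pi_div_twelve hγ₀ hγ; have := scale_pos hε k; positivity)).ne'
    measure_ball_lt_top.ne).ne'

lemma tan_mul_lt_of_mem_posBlob {k : ℕ} {z : ℝ × ℝ} (hz : z ∈ posBlob ε γ k) :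
    0 < z.1 ∧ 0 < z.2 ∧ tan γ * z.2 < z.1 ∧ tan γ * z.1 < z.2 := by
  have ht := tan_pos_of_le_pi_div_twelve hγ₀ hγ
  have ht' := tan_le_of_le_pi_div_twelve hγ₀ hγ
  have ha := scale_pos hε k
  obtain ⟨h₁, h₂⟩ := mem_posBlob_iff.1 hz
  obtain ⟨h₁, h₁'⟩ := abs_lt.1 h₁
  obtain ⟨h₂, h₂'⟩ := abs_lt.1 h₂
  refine ⟨by nlinarith, by nlinarith [mul_pos ht ha], by nlinarith [mul_pos ht ha],
    by nlinarith [mul_pos ht ha]⟩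

lemma tan_mul_lt_neg_of_mem_negBlob {k : ℕ} {z : ℝ × ℝ} (hz : z ∈ negBlob ε γ k) :
    0 < z.1 ∧ tan γ * z.1 < -z.2 := by
  have ht := tan_pos_of_le_pi_div_twelve hγ₀ hγ
  have ht' := tan_le_of_le_pi_div_twelve hγ₀ hγ
  have ha := scale_pos hε k
  obtain ⟨h₁, h₂⟩ := mem_negBlob_iff.1 hz
  obtain ⟨h₁, h₁'⟩ := abs_lt.1 h₁
  obtain ⟨h₂, h₂'⟩ := abs_lt.1 h₂
  refine ⟨by nlinarith, by nlinarith [mul_pos ht ha]⟩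

lemma abs_sub_scale_add_abs_le {k : ℕ} {z : ℝ × ℝ} (hz : z ∈ posBlob ε γ k ∪ negBlob ε γ k) :
    |z.1 - scale ε k| + |z.2| ≤ 107 / 100 * tan γ * scale ε k := by
  have ht := tan_pos_of_le_pi_div_twelve hγ₀ hγ
  have ha := scale_pos hε k
  have h₂ : |z.2| ≤ 106 / 100 * tan γ * scale ε k := by
    rcases hz with hz | hz
    · obtain ⟨h₂, h₂'⟩ := abs_lt.1 (mem_posBlob_iff.1 hz).2
      exact abs_le.2 ⟨by nlinarith [mul_pos ht ha], by linarith⟩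
    · obtain ⟨h₂, h₂'⟩ := abs_lt.1 (mem_negBlob_iff.1 hz).2
      exact abs_le.2 ⟨by linarith, by nlinarith [mul_pos ht ha]⟩
  have h₁ : |z.1 - scale ε k| < tan γ * scale ε k / 100 := by
    rcases hz with hz | hz
    exacts [(mem_posBlob_iff.1 hz).1, (mem_negBlob_iff.1 hz).1]
  linarith

lemma abs_add_abs_le_of_mem_blob {k : ℕ} {z : ℝ × ℝ} (hz : z ∈ posBlob ε γ k ∪ negBlob ε γ k) :
    |z.1| + |z.2| ≤ 2 / 5 * ε := by
  have h := abs_sub_scale_add_abs_le hε hγ₀ hγ hz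
  have ht := tan_le_of_le_pi_div_twelve hγ₀ hγ
  have ha := scale_pos hε k
  have ha' := scale_le hε k
  have := abs_sub_abs_le_abs_sub z.1 (scale ε k)
  rw [abs_of_pos ha] at this
  nlinarith

lemma blob_subset_euclBall (k : ℕ) : posBlob ε γ k ∪ negBlob ε γ k ⊆ euclBall ε := fun z hz => by
  have h := abs_add_abs_le_of_mem_blob hε hγ₀ hγ hz
  refine Real.sqrt_le_iff.2 ⟨hε.le, ?_⟩
  nlinarith [sq_abs z.1, sq_abs z.2, abs_nonneg z.1, abs_nonneg z.2]

end Blobs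

section Corner

variable {ε γ : ℝ} (hε : 0 < ε) (hγ₀ : 0 < γ) (hγ : γ ≤ π / 12) {s x₁ x₂ : ℝ} (hs : |s| ≤ γ)
include hε hγ₀ hγ hs

lemma posBlob_subset_image_rot_Icc (hx₁ : ε ≤ x₁) (hx₂ : ε ≤ x₂) (k : ℕ) :
    posBlob ε γ k ⊆ rot s '' (Icc 0 x₁ ×ˢ Icc 0 x₂) := by
  intro z hz
  have hγ' := lt_pi_div_two_of_le_pi_div_twelve hγ
  obtain ⟨hz₁, hz₂, hz₂₁, hz₁₂⟩ := tan_mul_lt_of_mem_posBlob hε hγ₀ hγ hz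
  have hsmall := abs_add_abs_le_of_mem_blob hε hγ₀ hγ (Or.inl hz)
  have h₁ : 0 < (rot (-s) z).1 := by
    have := mul_sin_add_mul_cos_pos hγ' hs hz₂.le hz₂₁
    simp only [rot, cos_neg, sin_neg]
    linarith
  have h₂ : 0 < (rot (-s) z).2 := by
    have := mul_sin_add_mul_cos_pos hγ' (by rwa [abs_neg]) hz₁.le hz₁₂
    simpa only [rot] using this
  rw [mem_image_rot_iff]
  exact ⟨⟨h₁.le, by linarith [le_abs_self (rot (-s) z).1, abs_rot_fst_le (-s) z]⟩,
    h₂.le, by linarith [le_abs_self (rot (-s) z).2, abs_rot_snd_le (-s) z]⟩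

lemma disjoint_negBlob_image_rot (A : Set (ℝ × ℝ)) (hA : A ⊆ {p | 0 ≤ p.2}) (k : ℕ) :
    Disjoint (negBlob ε γ k) (rot s '' A) := by
  refine Set.disjoint_left.2 fun z hz hzA => ?_
  obtain ⟨hz₁, hz₂⟩ := tan_mul_lt_neg_of_mem_negBlob hε hγ₀ hγ hz
  have := mul_sin_add_mul_cos_pos (lt_pi_div_two_of_le_pi_div_twelve hγ) hs hz₁.le hz₂
  have h : 0 ≤ (rot (-s) z).2 := hA (mem_image_rot_iff.1 hzA)
  simp only [rot, sin_neg, cos_neg] at h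
  linarith

end Corner

section Slanted

variable {ε γ : ℝ} (hε : 0 < ε) (hγ₀ : 0 < γ) (hγ : γ ≤ π / 12)
include hε hγ₀ hγ

lemma near_edge_of_cuts_rect {s a b : ℝ} {c : ℝ × ℝ} {k : ℕ}
    (h : Cuts (rect s c a b) (posBlob ε γ k ∪ negBlob ε γ k)) :
    (|scale ε k * cos s - (rot (-s) c).1| ≤ 107 / 100 * tan γ * scale ε k ∨
      |scale ε k * cos s - ((rot (-s) c).1 + a)| ≤ 107 / 100 * tan γ * scale ε k) ∨
    |scale ε k * -sin s - (rot (-s) c).2| ≤ 107 / 100 * tan γ * scale ε k ∨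
      |scale ε k * -sin s - ((rot (-s) c).2 + b)| ≤ 107 / 100 * tan γ * scale ε k := by
  rw [rect_eq_image_rot, image_rot_eq_preimage] at h
  have hB : ∀ z ∈ rot (-s) '' (posBlob ε γ k ∪ negBlob ε γ k),
      |z.1 - (rot (-s) (scale ε k, 0)).1| ≤ 107 / 100 * tan γ * scale ε k ∧
      |z.2 - (rot (-s) (scale ε k, 0)).2| ≤ 107 / 100 * tan γ * scale ε k := by
    rintro _ ⟨w, hw, rfl⟩
    have hw' := abs_sub_scale_add_abs_le hε hγ₀ hγ hw
    rw [← Prod.fst_sub, ← Prod.snd_sub, ← rot_sub]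
    exact ⟨(abs_rot_fst_le _ _).trans (by simpa using hw'),
      (abs_rot_snd_le _ _).trans (by simpa using hw')⟩
  simpa [rot] using near_edge_of_cuts_box hB h.image_of_preimage

open scoped Classical in
lemma card_filter_cuts_rect_le_eight {s : ℝ} (hs₁ : 3 * γ < |s|) (hs₂ : |s| < π / 2 - 3 * γ)
    (c : ℝ × ℝ) (a b : ℝ) (N : ℕ) :
    ((Finset.range N).filter fun k => Cuts (rect s c a b) (posBlob ε γ k ∪ negBlob ε γ k)).card
      ≤ 8 := by
  have ht := tan_pos_of_le_pi_div_twelve hγ₀ hγ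
  have h3 := mul_tan_le_sin_three_mul hγ₀ hγ
  have hsin : 5 * (107 / 100 * tan γ) < 3 * |-sin s| := by
    rw [abs_neg]; linarith [sin_le_abs_sin (by linarith) hs₁.le (by linarith)]
  have hcos : 5 * (107 / 100 * tan γ) < 3 * |cos s| := by
    linarith [sin_le_abs_cos (by linarith : 0 ≤ 3 * γ) hs₂.le]
  let F (β d : ℝ) : Finset ℕ :=
    (Finset.range N).filter fun k => |scale ε k * β - d| ≤ 107 / 100 * tan γ * scale ε k
  have hF {β : ℝ} (hβ : 5 * (107 / 100 * tan γ) < 3 * |β|) (d : ℝ) : (F β d).card ≤ 2 :=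
    card_filter_abs_mul_sub_le_two (scale_pos hε) (fun _ _ => four_mul_scale_le hε) hβ _
  have hsub : ((Finset.range N).filter fun k =>
      Cuts (rect s c a b) (posBlob ε γ k ∪ negBlob ε γ k)) ⊆
      (F (cos s) (rot (-s) c).1 ∪ F (cos s) ((rot (-s) c).1 + a)) ∪
        (F (-sin s) (rot (-s) c).2 ∪ F (-sin s) ((rot (-s) c).2 + b)) := fun k hk => by
    obtain ⟨hkN, hk⟩ := Finset.mem_filter.1 hk
    simp only [F, Finset.mem_union, Finset.mem_filter, hkN, true_and]
    exact near_edge_of_cuts_rect hε hγ₀ hγ hk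
  refine (Finset.card_le_card hsub).trans ((Finset.card_union_le _ _).trans ?_)
  have h₁ := (Finset.card_union_le _ _).trans (add_le_add (hF hcos (rot (-s) c).1)
    (hF hcos ((rot (-s) c).1 + a)))
  have h₂ := (Finset.card_union_le _ _).trans (add_le_add (hF hsin (rot (-s) c).2)
    (hF hsin ((rot (-s) c).2 + b)))
  omega

lemma le_sides_of_mem_rect_inter_blob {s a b : ℝ} {c x z : ℝ × ℝ} {k : ℕ}
    (hx : x ∈ rect s c a b) (hx₁ : 2 * ε ≤ |(rot (-s) x).1|) (hx₂ : 2 * ε ≤ |(rot (-s) x).2|)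
    (hz : z ∈ rect s c a b ∩ (posBlob ε γ k ∪ negBlob ε γ k)) :
    8 / 5 * ε ≤ a ∧ 8 / 5 * ε ≤ b := by
  have hsmall := abs_add_abs_le_of_mem_blob hε hγ₀ hγ hz.2
  have hz₁ := abs_rot_fst_le (-s) z
  have hz₂ := abs_rot_snd_le (-s) z
  have hd₁ := abs_sub_abs_le_abs_sub (rot (-s) x).1 (rot (-s) z).1
  have hd₂ := abs_sub_abs_le_abs_sub (rot (-s) x).2 (rot (-s) z).2
  rw [rect_eq_image_rot, mem_image_rot_iff] at hx
  obtain ⟨⟨hx₁', hx₁''⟩, hx₂', hx₂''⟩ := hx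
  obtain ⟨⟨hz₁', hz₁''⟩, hz₂', hz₂''⟩ := mem_image_rot_iff.1 (rect_eq_image_rot s c a b ▸ hz.1)
  have ha : |(rot (-s) x).1 - (rot (-s) z).1| < a := abs_sub_lt_iff.2 ⟨by linarith, by linarith⟩
  have hb : |(rot (-s) x).2 - (rot (-s) z).2| < b := abs_sub_lt_iff.2 ⟨by linarith, by linarith⟩
  constructor <;> linarith

lemma abs_setIntegral_phi_rect_le {N : ℕ} (hN : 8 / ε ^ 3 ≤ N) {s : ℝ} (hs₁ : 3 * γ < |s|)
    (hs₂ : |s| < π / 2 - 3 * γ) {c x : ℝ × ℝ} {a b : ℝ} (ha : 0 ≤ a) (hb : 0 ≤ b)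
    (hx : x ∈ rect s c a b)
    (hx₁ : 2 * ε ≤ |(rot (-s) x).1|) (hx₂ : 2 * ε ≤ |(rot (-s) x).2|) :
    |∫ p in rect s c a b, phi ε γ N p| ≤ ε / 2 * (a * b) := by
  classical
  set S := (Finset.range N).filter fun k => Cuts (rect s c a b) (posBlob ε γ k ∪ negBlob ε γ k)
  have hbound : |∫ p in rect s c a b, phi ε γ N p| ≤ S.card * (2 * N : ℝ)⁻¹ :=
    abs_setIntegral_dipoleSum_le (P := posBlob ε γ) (M := negBlob ε γ)
      (fun _ => measurableSet_ball) (fun _ => measurableSet_ball)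
      (fun _ => measure_ball_lt_top.ne) (fun _ => measure_ball_lt_top.ne) (volume_posBlob_eq ε γ) _
  obtain hS | ⟨k, hk⟩ := S.eq_empty_or_nonempty
  · rw [hS, Finset.card_empty, Nat.cast_zero, zero_mul] at hbound
    exact hbound.trans (by positivity)
  obtain ⟨⟨z, hz⟩, -⟩ := (Finset.mem_filter.1 hk).2
  obtain ⟨ha', hb'⟩ := le_sides_of_mem_rect_inter_blob hε hγ₀ hγ hx hx₁ hx₂ hz
  have h8 : (S.card : ℝ) ≤ 8 := by
    exact_mod_cast card_filter_cuts_rect_le_eight hε hγ₀ hγ hs₁ hs₂ c a b N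
  have hN₀ : (0 : ℝ) < N := lt_of_lt_of_le (by positivity) hN
  have hN' : 8 ≤ ε ^ 3 * N := by rwa [div_le_iff₀ (by positivity), mul_comm] at hN
  calc _ ≤ _ := hbound
    _ ≤ 8 * (2 * N : ℝ)⁻¹ := by gcongr
    _ ≤ ε / 2 * (8 / 5 * ε * (8 / 5 * ε)) := by
        rw [← div_eq_mul_inv, div_le_iff₀ (by positivity)]
        nlinarith [pow_pos hε 3]
    _ ≤ ε / 2 * (a * b) := by gcongr

lemma maxFn_phi_le {N : ℕ} (hN : 8 / ε ^ 3 ≤ N) {s : ℝ} (hs₁ : 3 * γ < |s|)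
    (hs₂ : |s| < π / 2 - 3 * γ) {x : ℝ × ℝ}
    (hx : x ∉ strip s (2 * ε) ∪ strip (s + π / 2) (2 * ε)) :
    maxFn s (fun _ => True) (phi ε γ N) x ≤ ENNReal.ofReal (ε / 2) := by
  rw [mem_union, not_or, mem_strip_iff, mem_strip_add_pi_div_two_iff, not_lt, not_lt] at hx
  refine iSup₂_le ?_
  rintro _ ⟨⟨c, a, b, ha, hb, -, -, rfl⟩, hxR⟩
  refine ENNReal.ofReal_le_ofReal (div_le_of_le_mul₀ measureReal_nonneg (by positivity) ?_)
  rw [← measureReal_def, measureReal_rect s c ha.le hb.le]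
  exact abs_setIntegral_phi_rect_le hε hγ₀ hγ hN hs₁ hs₂ ha.le hb.le hxR hx.2 hx.1

end Slanted

/-- for `0 < ε < 1`, `0 < γ ≤ π/12` there is a bounded measurable `φ`
supported in `B(ε)`, with `∫ φ = 0`, `∫ |φ| ≤ 1`, averages over rotated corner
rectangles at least `1/4` for `|s| ≤ γ`, and small maximal function away from the
two strips for `3γ < |s| < π/2 - 3γ`. -/
theorem exists_phi (ε γ : ℝ) (hε : 0 < ε ∧ ε < 1) (hγ : 0 < γ ∧ γ ≤ π / 12) :
    ∃ φ : ℝ × ℝ → ℝ, Measurable φ ∧ (∃ C : ℝ, ∀ x, |φ x| ≤ C) ∧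
      Function.support φ ⊆ euclBall ε ∧
      (∫ x : ℝ × ℝ, φ x) = 0 ∧ (∫ x : ℝ × ℝ, |φ x|) ≤ 1 ∧
      (∀ x₁ x₂ : ℝ, ε ≤ x₁ → ε ≤ x₂ → ∀ s : ℝ, |s| ≤ γ →
        (1 : ℝ) / 4 ≤ ∫ p in rot s '' (Set.Icc 0 x₁ ×ˢ Set.Icc 0 x₂), φ p) ∧
      (∀ s : ℝ, 3 * γ < |s| → |s| < π / 2 - 3 * γ →
        ∀ x ∉ strip s (2 * ε) ∪ strip (s + π / 2) (2 * ε),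
          maxFn s (fun _ => True) φ x < ENNReal.ofReal ε) := by
  obtain ⟨hε₀, -⟩ := hε
  obtain ⟨hγ₀, hγ⟩ := hγ
  set N := ⌈8 / ε ^ 3⌉₊
  have hN : 8 / ε ^ 3 ≤ N := Nat.le_ceil _
  have hN₀ : N ≠ 0 := (Nat.ceil_pos.2 (by positivity)).ne'
  have hP : ∀ k, MeasurableSet (posBlob ε γ k) := fun _ => measurableSet_ball
  have hM : ∀ k, MeasurableSet (negBlob ε γ k) := fun _ => measurableSet_ball
  have hPfin : ∀ k, volume (posBlob ε γ k) ≠ ∞ := fun _ => measure_ball_lt_top.ne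
  have hMfin : ∀ k, volume (negBlob ε γ k) ≠ ∞ := fun _ => measure_ball_lt_top.ne
  refine ⟨phi ε γ N, measurable_dipoleSum hP hM, ⟨_, abs_dipoleSum_le⟩,
    support_dipoleSum_subset.trans (iUnion_subset (blob_subset_euclBall hε₀ hγ₀ hγ)),
    integral_dipoleSum_eq_zero hP hM hPfin hMfin (volume_posBlob_eq ε γ),
    integral_abs_dipoleSum_le_one hP hM hPfin hMfin (volume_posBlob_eq ε γ),
    fun x₁ x₂ hx₁ hx₂ s hs => ?_, fun s hs₁ hs₂ x hx => ?_⟩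
  · rw [phi, setIntegral_dipoleSum_eq_half hP hM hPfin hMfin hN₀
      (measureReal_posBlob_ne_zero hε₀ hγ₀ hγ)
      (posBlob_subset_image_rot_Icc hε₀ hγ₀ hγ hs hx₁ hx₂)
      (disjoint_negBlob_image_rot hε₀ hγ₀ hγ hs _ fun p hp => hp.2.1)]
    norm_num
  · exact (maxFn_phi_le hε₀ hγ₀ hγ hN hs₁ hs₂ hx).trans_lt
      ((ENNReal.ofReal_lt_ofReal_iff hε₀).2 (by linarith))
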